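/- Fix a finite list m_1,…,m_k of natural numbers, a positive integer n, and an integer b. Then there exists a Laurent polynomial L with complex coefficients such that for every positive integer c, β_{m_1,…,m_k}(nc, bc) = L(c). In particular β_{m_1,…,m_k}(c, 0) and β_{m_1,…,m_k}(2c, c) are Laurent polynomials of c. -/

import Mathlib

/-!
Write `a = n s + r` with `0 ≤ r < n`, `0 ≤ s < c`. Since `ζ_{nc}^c = ζ_n` and `ζ_n^n = 1`, the
root of unity `ζ_{nc}^{a b c} = ζ_n^{r b}` depends on neither `s` nor `c`, so
`β(nc, bc) = ∑_r ζ_n^{rb} ∑_{s<c} P((ns + r)/(nc))` with `P = ∏ B_{m_j}`. Expanding `P` in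
monomials, `∑_{s<c} ((ns + r)/(nc))^d` is `(nc)^{-d}` times `∑_{s<c} (ns + r)^d`, which by
Faulhaber's formula is a polynomial in `c`.
-/

/-- `ζ_n = exp(2πi/n)`, the standard primitive `n`-th root of unity. -/
noncomputable def zeta (n : ℕ) : ℂ := Complex.exp (2 * (Real.pi : ℂ) * Complex.I / (n : ℂ))

/-- `β_{m_1,…,m_k}(n,b) = ∑_{a=0}^{n-1} ζ_n^{ab} ∏_j B_{m_j}(a/n)`, where
`B_m` is the `m`-th Bernoulli polynomial. -/
noncomputable def betaB (M : List ℕ) (n : ℕ) (b : ℤ) : ℂ :=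
  ∑ a ∈ Finset.range n, zeta n ^ ((a : ℤ) * b) *
    (M.map fun m => (((Polynomial.bernoulli m).eval ((a : ℚ) / (n : ℚ)) : ℚ) : ℂ)).prod

open Finset Polynomial

def laurentFunctions : Submodule ℂ (ℕ → ℂ) where
  carrier := {f | ∃ (N : ℕ) (coef : ℤ → ℂ), ∀ c : ℕ, 0 < c →
    f c = ∑ j ∈ Icc (-(N : ℤ)) N, coef j * (c : ℂ) ^ j}
  zero_mem' := ⟨0, 0, by simp⟩
  add_mem' := by
    rintro f g ⟨N₁, a₁, hf⟩ ⟨N₂, a₂, hg⟩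
    refine ⟨max N₁ N₂, fun j => (if j ∈ Icc (-(N₁ : ℤ)) N₁ then a₁ j else 0) +
      (if j ∈ Icc (-(N₂ : ℤ)) N₂ then a₂ j else 0), fun c hc => ?_⟩
    simp only [Pi.add_apply, add_mul, ite_mul, zero_mul, sum_add_distrib, sum_ite_mem, hf c hc,
      hg c hc]
    rw [inter_eq_right.2 (Icc_subset_Icc (by omega) (by omega)),
      inter_eq_right.2 (Icc_subset_Icc (by omega) (by omega))]
  smul_mem' := by
    rintro a f ⟨N, coef, hf⟩
    exact ⟨N, a • coef, fun c hc => by simp [hf c hc, mul_sum, mul_assoc]⟩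

lemma mem_laurentFunctions_of_eq {f g : ℕ → ℂ} (hf : f ∈ laurentFunctions)
    (h : ∀ c, 0 < c → f c = g c) : g ∈ laurentFunctions := by
  obtain ⟨N, coef, hf⟩ := hf
  exact ⟨N, coef, fun c hc => (h c hc).symm.trans (hf c hc)⟩

lemma zpow_mem_laurentFunctions (e : ℤ) : (fun c : ℕ => (c : ℂ) ^ e) ∈ laurentFunctions := by
  refine ⟨e.natAbs, fun j => if j = e then 1 else 0, fun c _ => ?_⟩
  have he : e ∈ Icc (-(e.natAbs : ℤ)) e.natAbs := mem_Icc.2 ⟨by omega, by omega⟩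
  simp only [ite_mul, one_mul, zero_mul, sum_ite_eq', if_pos he]

lemma eval_mul_zpow_mem_laurentFunctions (p : ℚ[X]) (e : ℤ) :
    (fun c : ℕ => ((p.eval (c : ℚ) : ℚ) : ℂ) * (c : ℂ) ^ e) ∈ laurentFunctions := by
  refine mem_laurentFunctions_of_eq (f := ∑ i ∈ range (p.natDegree + 1),
      (p.coeff i : ℂ) • fun c : ℕ => (c : ℂ) ^ ((i : ℤ) + e))
    (sum_mem fun i _ => Submodule.smul_mem _ _ (zpow_mem_laurentFunctions _)) fun c hc => ?_
  have hc : (c : ℂ) ≠ 0 := by exact_mod_cast hc.ne'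
  simp [eval_eq_sum_range, sum_mul, zpow_add₀ hc, mul_assoc]

theorem Polynomial.exists_eval_eq_sum_range (q : ℚ[X]) :
    ∃ S : ℚ[X], ∀ c : ℕ, S.eval (c : ℚ) = ∑ s ∈ range c, q.eval (s : ℚ) := by
  induction q using Polynomial.induction_on' with
  | add p q hp hq =>
    obtain ⟨Sp, hSp⟩ := hp
    obtain ⟨Sq, hSq⟩ := hq
    exact ⟨Sp + Sq, fun c => by simp [hSp, hSq, sum_add_distrib]⟩
  | monomial k a =>
    refine ⟨C (a / (k + 1)) * (bernoulli (k + 1) - C (_root_.bernoulli (k + 1))), fun c => ?_⟩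
    rw [eval_mul, eval_C, eval_sub, eval_C, ← Nat.succ_eq_add_one,
      ← sum_range_pow_eq_bernoulli_sub]
    simp only [eval_monomial, ← mul_sum]
    field_simp

lemma sum_range_eval_mul_zpow_mem_laurentFunctions (q : ℚ[X]) (e : ℤ) :
    (fun c : ℕ => ((∑ s ∈ range c, q.eval (s : ℚ) : ℚ) : ℂ) * (c : ℂ) ^ e) ∈
      laurentFunctions := by
  obtain ⟨S, hS⟩ := q.exists_eval_eq_sum_range
  simpa only [hS] using eval_mul_zpow_mem_laurentFunctions S e

lemma sum_range_eval_div_mem_laurentFunctions (P : ℚ[X]) (n r : ℕ) :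
    (fun c : ℕ => ((∑ s ∈ range c, P.eval (((n * s + r : ℕ) : ℚ) / ((n * c : ℕ) : ℚ)) : ℚ) : ℂ))
      ∈ laurentFunctions := by
  have hmem : (∑ d ∈ range (P.natDegree + 1), ((P.coeff d / n ^ d : ℚ) : ℂ) • fun c : ℕ =>
      ((∑ s ∈ range c, ((C (n : ℚ) * X + C (r : ℚ)) ^ d).eval (s : ℚ) : ℚ) : ℂ) *
        (c : ℂ) ^ (-(d : ℤ))) ∈ laurentFunctions :=
    sum_mem fun d _ => Submodule.smul_mem _ _
      (sum_range_eval_mul_zpow_mem_laurentFunctions ((C (n : ℚ) * X + C (r : ℚ)) ^ d) _)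
  refine mem_laurentFunctions_of_eq hmem fun c _ => ?_
  have hterm : ∀ s d : ℕ, P.coeff d * (((n * s + r : ℕ) : ℚ) / ((n * c : ℕ) : ℚ)) ^ d =
      P.coeff d / n ^ d * (n * s + r) ^ d * ((c : ℚ) ^ d)⁻¹ := fun s d => by
    push_cast
    rw [div_pow, mul_pow, div_eq_mul_inv, mul_inv]
    ring
  simp only [Finset.sum_apply, Pi.smul_apply, smul_eq_mul, eval_pow, eval_add, eval_mul, eval_C,
    eval_X, eval_eq_sum_range (p := P), hterm, zpow_neg, zpow_natCast]
  rw [sum_comm]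
  push_cast
  simp only [mul_sum, sum_mul, mul_assoc]

lemma zeta_ne_zero (n : ℕ) : zeta n ≠ 0 := Complex.exp_ne_zero _

lemma zeta_pow_self (n : ℕ) : zeta n ^ n = 1 := by
  rcases eq_or_ne n 0 with rfl | hn
  · exact pow_zero _
  · rw [zeta, ← Complex.exp_nat_mul, mul_div_cancel₀ _ (Nat.cast_ne_zero.2 hn),
      Complex.exp_two_pi_mul_I]

lemma zeta_mul_pow (n : ℕ) {c : ℕ} (hc : c ≠ 0) : zeta (n * c) ^ c = zeta n := by
  rw [zeta, zeta, ← Complex.exp_nat_mul, Nat.cast_mul, ← div_div,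
    mul_div_cancel₀ _ (Nat.cast_ne_zero.2 hc)]

lemma zeta_mul_zpow_add_mul (n : ℕ) {c : ℕ} (hc : c ≠ 0) (s r : ℕ) (b : ℤ) :
    zeta (n * c) ^ (((n * s + r : ℕ) : ℤ) * (b * c)) = zeta n ^ ((r : ℤ) * b) := by
  calc zeta (n * c) ^ (((n * s + r : ℕ) : ℤ) * (b * c))
      = (zeta (n * c) ^ c) ^ ((n : ℤ) * (s * b) + r * b) := by
        rw [← zpow_natCast, ← zpow_mul]; push_cast; ring_nf
    _ = (zeta n ^ n) ^ ((s : ℤ) * b) * zeta n ^ ((r : ℤ) * b) := by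
        rw [zeta_mul_pow n hc, zpow_add₀ (zeta_ne_zero n), ← zpow_natCast, ← zpow_mul]
    _ = zeta n ^ ((r : ℤ) * b) := by rw [zeta_pow_self, one_zpow, one_mul]

lemma sum_range_mul_eq_sum_sum {M : Type*} [AddCommMonoid M] (f : ℕ → M) (n c : ℕ) :
    ∑ a ∈ range (n * c), f a = ∑ s ∈ range c, ∑ r ∈ range n, f (n * s + r) := by
  induction c with
  | zero => simp
  | succ c ih => rw [mul_add_one, sum_range_add, ih, sum_range_succ]

lemma betaB_mul_eq (M : List ℕ) (n : ℕ) (b : ℤ) {c : ℕ} (hc : c ≠ 0) :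
    betaB M (n * c) (b * c) = ∑ r ∈ range n, zeta n ^ ((r : ℤ) * b) *
      ((∑ s ∈ range c, (M.map Polynomial.bernoulli).prod.eval
        (((n * s + r : ℕ) : ℚ) / ((n * c : ℕ) : ℚ)) : ℚ) : ℂ) := by
  rw [betaB, sum_range_mul_eq_sum_sum, sum_comm]
  refine sum_congr rfl fun r _ => ?_
  rw [Rat.cast_sum, mul_sum]
  refine sum_congr rfl fun s _ => ?_
  rw [zeta_mul_zpow_add_mul n hc, eval_list_prod, Rat.cast_list_prod, List.map_map, List.map_map]
  rfl

theorem betaB_scaling_laurent_general (M : List ℕ) (n : ℕ) (b : ℤ) :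
    ∃ (N : ℕ) (coef : ℤ → ℂ), ∀ c : ℕ, 0 < c →
      betaB M (n * c) (b * (c : ℤ)) =
        ∑ j ∈ Finset.Icc (-(N : ℤ)) (N : ℤ), coef j * (c : ℂ) ^ j :=
  mem_laurentFunctions_of_eq (f := ∑ r ∈ range n, zeta n ^ ((r : ℤ) * b) • _)
    (sum_mem fun r _ => Submodule.smul_mem _ _
      (sum_range_eval_div_mem_laurentFunctions (M.map Polynomial.bernoulli).prod n r))
    fun c hc => by simpa using (betaB_mul_eq M n b hc.ne').symm

/-- For fixed `m_1,…,m_k`, `n` and `b`, the function `c ↦ β_{m_1,…,m_k}(nc, bc)` is a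
Laurent polynomial of `c` (with complex coefficients). -/
theorem betaB_scaling_laurent (M : List ℕ) (n : ℕ) (hn : 0 < n) (b : ℤ) :
    ∃ (N : ℕ) (coef : ℤ → ℂ), ∀ c : ℕ, 0 < c →
      betaB M (n * c) (b * (c : ℤ)) =
        ∑ j ∈ Finset.Icc (-(N : ℤ)) (N : ℤ), coef j * (c : ℂ) ^ j :=
  betaB_scaling_laurent_general M n b
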